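/- In the TSO game of Group I (player X may flush the buffer after her move, player Y may flush before her move), if player X has a winning strategy from c₀, then she has a winning strategy in which every configuration reached immediately after her moves has completely empty buffers; consequently every play consistent with this strategy visits, after at most two steps, only configurations with at most one buffered message in total. -/
import Mathlib


/-- A safety game: configurations `C`, player A's configurations `A`
(player B owns the complement), final configurations `F ⊆ A`, and a
transition relation `rel`. Player B tries to reach `F`, player A tries
to avoid it. -/
structure SafetyGame (C : Type*) where
  A : Set C
  F : Set C
  rel : C → C → Prop
  finalInA : F ⊆ A

namespace SafetyGame

variable {C : Type*} {D : Type*}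

/-- An infinite play of the game. -/
def IsPlay (G : SafetyGame C) (p : ℕ → C) : Prop := ∀ i, G.rel (p i) (p (i + 1))

/-- Deadlock-freedom: every configuration has a successor. -/
def NoDeadlock (G : SafetyGame C) : Prop := ∀ c, ∃ c', G.rel c c'

/-- A (history-dependent) strategy for player A maps a history together with a
current configuration owned by A to a successor. -/
def ValidA (G : SafetyGame C) (σ : List C → C → C) : Prop :=
  ∀ l c, c ∈ G.A → G.rel c (σ l c)

def ValidB (G : SafetyGame C) (σ : List C → C → C) : Prop :=
  ∀ l c, c ∉ G.A → G.rel c (σ l c)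

/-- The history of a play strictly before position `n`. -/
def hist (p : ℕ → C) (n : ℕ) : List C := (List.range n).map p

def ConsistentA (G : SafetyGame C) (σ : List C → C → C) (p : ℕ → C) : Prop :=
  ∀ n, p n ∈ G.A → p (n + 1) = σ (hist p n) (p n)

def ConsistentB (G : SafetyGame C) (σ : List C → C → C) (p : ℕ → C) : Prop :=
  ∀ n, p n ∉ G.A → p (n + 1) = σ (hist p n) (p n)

/-- Player A wins from `c`: she has a strategy such that every play from `c`
consistent with it avoids the final configurations. -/
def WinningA (G : SafetyGame C) (c : C) : Prop :=
  ∃ σ, G.ValidA σ ∧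
    ∀ p, G.IsPlay p → p 0 = c → G.ConsistentA σ p → ∀ i, p i ∉ G.F

/-- Player B wins from `c`: she has a strategy such that every play from `c`
consistent with it visits a final configuration. -/
def WinningB (G : SafetyGame C) (c : C) : Prop :=
  ∃ σ, G.ValidB σ ∧
    ∀ p, G.IsPlay p → p 0 = c → G.ConsistentB σ p → ∃ i, p i ∈ G.F

/-- A bisimulation between two safety games: zig, zag, same owner, same finality. -/
def IsBisim (G : SafetyGame C) (H : SafetyGame D) (R : C → D → Prop) : Prop :=
  ∀ c₁ c₂, R c₁ c₂ →
    (∀ c₃, G.rel c₁ c₃ → ∃ c₄, H.rel c₂ c₄ ∧ R c₃ c₄) ∧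
    (∀ c₄, H.rel c₂ c₄ → ∃ c₃, G.rel c₁ c₃ ∧ R c₃ c₄) ∧
    (c₁ ∈ G.A ↔ c₂ ∈ H.A) ∧ (c₁ ∈ G.F ↔ c₂ ∈ H.F)

end SafetyGame

namespace SafetyGame

open scoped Classical

variable {C : Type*}

/-- `Owns G X c` : it is player `X`'s turn at `c`, where `X = true` denotes
player A (owner of `G.A`) and `X = false` her opponent. -/
def Owns (G : SafetyGame C) (X : Bool) (c : C) : Prop := (c ∈ G.A ↔ X = true)

/-- A valid positional strategy for player `X`. -/
def ValidPos (G : SafetyGame C) (X : Bool) (σ : C → C) : Prop :=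
  ∀ c, G.Owns X c → G.rel c (σ c)

/-- The unique play determined by positional strategies `σ` (for player `X`)
and `τ` (for her opponent) from `c₀`. -/
noncomputable def playOf (G : SafetyGame C) (X : Bool) (σ τ : C → C) (c₀ : C) : ℕ → C
  | 0 => c₀
  | n + 1 =>
      let c := playOf G X σ τ c₀ n
      if G.Owns X c then σ c else τ c

/-- The winning condition of player `X` on a play: avoid `F` if `X` is player A,
reach `F` if `X` is player B. -/
def WinsFor (G : SafetyGame C) (X : Bool) (p : ℕ → C) : Prop :=
  if X = true then ∀ i, p i ∉ G.F else ∃ i, p i ∈ G.F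

/-- `σ` is a positional winning strategy for player `X` from `c₀`. -/
def WinningPos (G : SafetyGame C) (X : Bool) (c₀ : C) (σ : C → C) : Prop :=
  G.ValidPos X σ ∧ ∀ τ, G.ValidPos (!X) τ → G.WinsFor X (G.playOf X σ τ c₀)

end SafetyGame

/-- TSO instructions: read, write, atomic read-write, skip, memory fence. -/
inductive Instr (X V : Type*) where
  | rd : X → V → Instr X V
  | wr : X → V → Instr X V
  | arw : X → V → V → Instr X V
  | nop : Instr X V
  | mf : Instr X V

/-- A concurrent program: for each process `ι ∈ I` a transition relation over
local states `Q`, labelled by instructions. -/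
structure Prog (I Q X V : Type*) where
  trans : I → Set (Q × Instr X V × Q)

section TSO

variable {I Q X V : Type*} [DecidableEq X] [DecidableEq I]

/-- The value of `x` visible to a process with buffer `b` (newest message at
the head) and memory `mem`. -/
def bufVal : List (X × V) → (X → V) → X → V
  | [], mem, x => mem x
  | (y, v) :: b, mem, x => if y = x then v else bufVal b mem x

/-- A TSO configuration: global state, buffer contents (newest message at the
head of each buffer), memory. -/
structure TsoConf (I Q X V : Type*) where
  st : I → Q
  buf : I → List (X × V)
  mem : X → V

/-- A TSO instruction step of process `ι` using the local transition `t`. -/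
inductive TsoStep (P : Prog I Q X V) (ι : I) :
    Q × Instr X V × Q → TsoConf I Q X V → TsoConf I Q X V → Prop
  | rd {c : TsoConf I Q X V} {x v q'} :
      (c.st ι, Instr.rd x v, q') ∈ P.trans ι → bufVal (c.buf ι) c.mem x = v →
      TsoStep P ι (c.st ι, Instr.rd x v, q')
        c ⟨Function.update c.st ι q', c.buf, c.mem⟩
  | wr {c : TsoConf I Q X V} {x v q'} :
      (c.st ι, Instr.wr x v, q') ∈ P.trans ι →
      TsoStep P ι (c.st ι, Instr.wr x v, q')
        c ⟨Function.update c.st ι q',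
           Function.update c.buf ι ((x, v) :: c.buf ι), c.mem⟩
  | arw {c : TsoConf I Q X V} {x v v' q'} :
      (c.st ι, Instr.arw x v v', q') ∈ P.trans ι → c.buf ι = [] → c.mem x = v →
      TsoStep P ι (c.st ι, Instr.arw x v v', q')
        c ⟨Function.update c.st ι q', c.buf, Function.update c.mem x v'⟩
  | nop {c : TsoConf I Q X V} {q'} :
      (c.st ι, Instr.nop, q') ∈ P.trans ι →
      TsoStep P ι (c.st ι, Instr.nop, q')
        c ⟨Function.update c.st ι q', c.buf, c.mem⟩
  | mf {c : TsoConf I Q X V} {q'} :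
      (c.st ι, Instr.mf, q') ∈ P.trans ι → c.buf ι = [] →
      TsoStep P ι (c.st ι, Instr.mf, q')
        c ⟨Function.update c.st ι q', c.buf, c.mem⟩

/-- An update step: some process commits the oldest message of its buffer to
the memory. -/
def TsoUpd (c c' : TsoConf I Q X V) : Prop :=
  ∃ (ι : I) (b : List (X × V)) (x : X) (v : V),
    c.buf ι = b ++ [(x, v)] ∧
    c' = ⟨c.st, Function.update c.buf ι b, Function.update c.mem x v⟩

/-- Any number of update steps. -/
def TsoUpdStar : TsoConf I Q X V → TsoConf I Q X V → Prop :=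
  Relation.ReflTransGen TsoUpd

end TSO

section GroupI

variable {I Q X V : Type*} [DecidableEq X] [DecidableEq I] [Fintype I]

/-- Some process performs an instruction step. -/
def progStep (P : Prog I Q X V) (c c' : TsoConf I Q X V) : Prop :=
  ∃ ι t, TsoStep P ι t c c'

/-- The total number of messages in all buffers. -/
def totalBuf (c : TsoConf I Q X V) : ℕ := ∑ ι : I, (c.buf ι).length

/-- The Group I TSO game: player `X` (the player owning the configurations
whose first component is `X`) may perform any number of buffer updates after
her move, her opponent `Y` may perform any number of buffer updates before her
own move. Final configurations are the player-A configurations (first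
component `true`) in which some process is in a final state of `QF`. -/
def groupIGame (P : Prog I Q X V) (QF : Set Q) (Xp : Bool) :
    SafetyGame (Bool × TsoConf I Q X V) where
  A := {p | p.1 = true}
  F := {p | p.1 = true ∧ ∃ ι, p.2.st ι ∈ QF}
  rel := fun p p' => p'.1 = !p.1 ∧
    (if p.1 = Xp then
      ∃ c₂, progStep P p.2 c₂ ∧ TsoUpdStar c₂ p'.2
    else
      ∃ c₁, TsoUpdStar p.2 c₁ ∧ progStep P c₁ p'.2)
  finalInA := fun _ hp => hp.1

end GroupI

section GroupIAux

open scoped Classical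

variable {I Q X V : Type*} [DecidableEq X] [DecidableEq I] [Fintype I]

lemma totalBuf_eq_zero_iff (c : TsoConf I Q X V) :
    totalBuf c = 0 ↔ ∀ ι, c.buf ι = [] := by
  simp [totalBuf, Finset.sum_eq_zero_iff, List.length_eq_zero_iff]

lemma sum_length_split (f : I → List (X × V)) (ι : I) :
    ∑ j : I, (f j).length = (f ι).length + ∑ j ∈ Finset.univ.erase ι, (f j).length :=
  (Finset.add_sum_erase _ _ (Finset.mem_univ ι)).symm

lemma sum_length_update (f : I → List (X × V)) (ι : I) (l : List (X × V)) :
    ∑ j : I, (Function.update f ι l j).length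
      = l.length + ∑ j ∈ Finset.univ.erase ι, (f j).length := by
  rw [sum_length_split (Function.update f ι l) ι]
  congr 1
  · simp
  · apply Finset.sum_congr rfl
    intro j hj
    rw [Function.update_of_ne (Finset.ne_of_mem_erase hj)]

lemma tsoUpd_totalBuf {c c' : TsoConf I Q X V} (h : TsoUpd c c') :
    totalBuf c = totalBuf c' + 1 := by
  obtain ⟨ι, b, x, v, hb, rfl⟩ := h
  show totalBuf c = (∑ j : I, (Function.update c.buf ι b j).length) + 1
  rw [sum_length_update, totalBuf, sum_length_split c.buf ι, hb]
  simp [Nat.add_assoc, Nat.add_comm, Nat.add_left_comm]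

lemma updStar_totalBuf {c c' : TsoConf I Q X V} (h : TsoUpdStar c c') :
    totalBuf c' ≤ totalBuf c := by
  induction h with
  | refl => exact le_rfl
  | tail _ h2 ih => have := tsoUpd_totalBuf h2; omega

lemma progStep_totalBuf {P : Prog I Q X V} {c c' : TsoConf I Q X V}
    (h : progStep P c c') : totalBuf c' ≤ totalBuf c + 1 := by
  obtain ⟨ι, t, hstep⟩ := h
  cases hstep with
  | rd h1 h2 => simp [totalBuf]
  | arw h1 h2 h3 => simp [totalBuf]
  | nop h1 => simp [totalBuf]
  | mf h1 h2 => simp [totalBuf]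
  | @wr _ x v q' h1 =>
      show (∑ j : I, (Function.update c.buf ι ((x, v) :: c.buf ι) j).length) ≤ totalBuf c + 1
      rw [sum_length_update, totalBuf, sum_length_split c.buf ι]
      simp [Nat.add_assoc, Nat.add_comm, Nat.add_left_comm]

lemma exists_flush : ∀ (n : ℕ) (c : TsoConf I Q X V), totalBuf c = n →
    ∃ c', TsoUpdStar c c' ∧ c'.st = c.st ∧ totalBuf c' = 0 := by
  intro n
  induction n using Nat.strong_induction_on with
  | _ n ih =>
    intro c hc
    by_cases h0 : totalBuf c = 0
    · exact ⟨c, Relation.ReflTransGen.refl, rfl, h0⟩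
    · have hex : ∃ ι, c.buf ι ≠ [] := by
        by_contra hall
        push_neg at hall
        exact h0 ((totalBuf_eq_zero_iff c).2 hall)
      obtain ⟨ι, hι⟩ := hex
      obtain ⟨b, ⟨x, v⟩, hb⟩ : ∃ b xv, c.buf ι = b ++ [xv] :=
        ⟨(c.buf ι).dropLast, (c.buf ι).getLast hι,
          ((c.buf ι).dropLast_append_getLast hι).symm⟩
      have hupd : TsoUpd c ⟨c.st, Function.update c.buf ι b, Function.update c.mem x v⟩ :=
        ⟨ι, b, x, v, hb, rfl⟩
      have hkey := tsoUpd_totalBuf hupd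
      obtain ⟨c', h1, h2, h3⟩ :=
        ih (totalBuf (⟨c.st, Function.update c.buf ι b, Function.update c.mem x v⟩ :
            TsoConf I Q X V)) (by omega) _ rfl
      exact ⟨c', Relation.ReflTransGen.head hupd h1, h2, h3⟩

/-- A canonical full flush of a configuration. -/
noncomputable def flushConf (c : TsoConf I Q X V) : TsoConf I Q X V :=
  (exists_flush (totalBuf c) c rfl).choose

lemma flushConf_updStar (c : TsoConf I Q X V) : TsoUpdStar c (flushConf c) :=
  (exists_flush (totalBuf c) c rfl).choose_spec.1

lemma flushConf_st (c : TsoConf I Q X V) : (flushConf c).st = c.st :=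
  (exists_flush (totalBuf c) c rfl).choose_spec.2.1

lemma flushConf_totalBuf (c : TsoConf I Q X V) : totalBuf (flushConf c) = 0 :=
  (exists_flush (totalBuf c) c rfl).choose_spec.2.2

variable (P : Prog I Q X V) (QF : Set Q) (Xp : Bool)

lemma owns_iff (b : Bool) (c : Bool × TsoConf I Q X V) :
    (groupIGame P QF Xp).Owns b c ↔ c.1 = b := by
  unfold SafetyGame.Owns groupIGame
  simp only [Set.mem_setOf_eq]
  cases c.1 <;> cases b <;> simp

lemma bool_resolve {a b : Bool} (h : a ≠ b) : a = !b := by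
  cases a <;> cases b <;> simp_all

lemma mem_F_iff {a b : Bool × TsoConf I Q X V} (h1 : a.1 = b.1) (h2 : a.2.st = b.2.st) :
    a ∈ (groupIGame P QF Xp).F ↔ b ∈ (groupIGame P QF Xp).F := by
  unfold groupIGame
  simp only [Set.mem_setOf_eq, h1, h2]

lemma rel_flush_after {c d : Bool × TsoConf I Q X V} (hc : c.1 = Xp)
    (h : (groupIGame P QF Xp).rel c d) :
    (groupIGame P QF Xp).rel c (d.1, flushConf d.2) := by
  obtain ⟨h1, h2⟩ := h
  refine ⟨h1, ?_⟩
  rw [if_pos hc] at h2 ⊢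
  obtain ⟨c₂, hs, hu⟩ := h2
  exact ⟨c₂, hs, hu.trans (flushConf_updStar d.2)⟩

lemma rel_flush_before {c d : Bool × TsoConf I Q X V} (hc : ¬ c.1 = Xp)
    (h : (groupIGame P QF Xp).rel (c.1, flushConf c.2) d) :
    (groupIGame P QF Xp).rel c d := by
  obtain ⟨h1, h2⟩ := h
  refine ⟨h1, ?_⟩
  rw [if_neg hc] at h2 ⊢
  obtain ⟨c₁, hu, hs⟩ := h2
  exact ⟨c₁, (flushConf_updStar c.2).trans hu, hs⟩

end GroupIAux

/-- **Group I.** In the TSO game where player `X` may flush buffer messages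
after her move and her opponent before her own move, if player `X` has a
(positional) winning strategy from `c₀`, then she also has a winning strategy
under which every configuration reached immediately after her moves has
completely empty buffers; consequently, every play consistent with this
strategy visits, after at most two steps, only configurations with at most one
buffered message in total. -/
theorem groupI_empty_buffer_strategy {I Q X V : Type*}
    [DecidableEq X] [DecidableEq I] [Fintype I]
    (P : Prog I Q X V) (QF : Set Q) (Xp : Bool)
    (c₀ : Bool × TsoConf I Q X V) (σ : Bool × TsoConf I Q X V → Bool × TsoConf I Q X V)
    (hwin : (groupIGame P QF Xp).WinningPos Xp c₀ σ) :
    ∃ σ', (groupIGame P QF Xp).WinningPos Xp c₀ σ' ∧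
      (∀ p, (groupIGame P QF Xp).Owns Xp p → totalBuf (σ' p).2 = 0) ∧
      (∀ τ, (groupIGame P QF Xp).ValidPos (!Xp) τ →
        ∀ i, 2 ≤ i → totalBuf ((groupIGame P QF Xp).playOf Xp σ' τ c₀ i).2 ≤ 1) := by
  classical
  obtain ⟨hσv, hσw⟩ := hwin
  set G := groupIGame P QF Xp with hG
  set g : Bool × TsoConf I Q X V → Bool × TsoConf I Q X V :=
    fun p => (p.1, flushConf p.2) with hg
  set σ' : Bool × TsoConf I Q X V → Bool × TsoConf I Q X V := fun p => g (σ p) with hσ'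
  have howns : ∀ (b : Bool) (c : Bool × TsoConf I Q X V), G.Owns b c ↔ c.1 = b :=
    owns_iff P QF Xp
  have hσ'v : G.ValidPos Xp σ' := by
    intro c hc
    exact rel_flush_after P QF Xp ((howns Xp c).1 hc) (hσv c hc)
  -- plays satisfy rel at every step
  have step_rel : ∀ (s t : Bool × TsoConf I Q X V → Bool × TsoConf I Q X V),
      G.ValidPos Xp s → G.ValidPos (!Xp) t → ∀ n,
      G.rel (G.playOf Xp s t c₀ n) (G.playOf Xp s t c₀ (n + 1)) := by
    intro s t hs ht n
    have hrec : G.playOf Xp s t c₀ (n + 1) =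
        if G.Owns Xp (G.playOf Xp s t c₀ n) then s (G.playOf Xp s t c₀ n)
        else t (G.playOf Xp s t c₀ n) := rfl
    by_cases h : G.Owns Xp (G.playOf Xp s t c₀ n)
    · rw [hrec, if_pos h]; exact hs _ h
    · rw [hrec, if_neg h]
      refine ht _ ?_
      rw [howns] at h ⊢
      exact bool_resolve h
  refine ⟨σ', ⟨hσ'v, ?_⟩, ?_, ?_⟩
  · -- σ' is winning
    intro τ hτv
    set p' := G.playOf Xp σ' τ c₀ with hp'
    set τ₁ : Bool × TsoConf I Q X V → Bool × TsoConf I Q X V :=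
      fun c => if c = c₀ then τ c₀ else τ (g c) with hτ₁def
    set τ₂ : Bool × TsoConf I Q X V → Bool × TsoConf I Q X V := fun c => τ (g c) with hτ₂def
    have hgτ : ∀ c : Bool × TsoConf I Q X V, ¬ c.1 = Xp → G.rel c (τ (g c)) := by
      intro c hc
      refine rel_flush_before P QF Xp hc ?_
      refine hτv (g c) ?_
      rw [howns]
      exact bool_resolve hc
    have hτ₂v : G.ValidPos (!Xp) τ₂ := by
      intro c hc
      rw [howns] at hc
      have hcx : ¬ c.1 = Xp := by rw [hc]; cases Xp <;> simp
      exact hgτ c hcx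
    have hτ₁v : G.ValidPos (!Xp) τ₁ := by
      intro c hc
      by_cases hcc : c = c₀
      · simp only [hτ₁def, if_pos hcc]
        subst hcc
        exact hτv c hc
      · simp only [hτ₁def, if_neg hcc]
        rw [howns] at hc
        have hcx : ¬ c.1 = Xp := by rw [hc]; cases Xp <;> simp
        exact hgτ c hcx
    set p₁ := G.playOf Xp σ τ₁ c₀ with hp₁
    set p₂ := G.playOf Xp σ τ₂ c₀ with hp₂
    have hrel' : ∀ n, G.rel (p' n) (p' (n + 1)) := step_rel σ' τ hσ'v hτv
    have hrel₁ : ∀ n, G.rel (p₁ n) (p₁ (n + 1)) := step_rel σ τ₁ hσv hτ₁v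
    have hrel₂ : ∀ n, G.rel (p₂ n) (p₂ (n + 1)) := step_rel σ τ₂ hσv hτ₂v
    -- simulation relations
    set R₂ : (Bool × TsoConf I Q X V) → (Bool × TsoConf I Q X V) → Prop :=
      fun a b => if a.1 = Xp then b = a else b = g a with hR₂
    set R₁ : (Bool × TsoConf I Q X V) → (Bool × TsoConf I Q X V) → Prop :=
      fun a b => if a.1 = Xp then b = a else (b = g a ∨ (b = a ∧ a = c₀)) with hR₁
    set Collide : ℕ → Prop := fun k => p' k = g c₀ ∧ ¬ c₀.1 = Xp with hCol
    have hFtrans : ∀ a b : Bool × TsoConf I Q X V,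
        (b = a ∨ b = g a) → (a ∈ G.F ↔ b ∈ G.F) := by
      rintro a b (rfl | rfl)
      · exact Iff.rfl
      · exact mem_F_iff P QF Xp rfl (flushConf_st a.2).symm
    have hF₂ : ∀ a b, R₂ a b → (a ∈ G.F ↔ b ∈ G.F) := by
      intro a b h
      simp only [hR₂] at h
      split at h
      · exact hFtrans a b (Or.inl h)
      · exact hFtrans a b (Or.inr h)
    have hF₁ : ∀ a b, R₁ a b → (a ∈ G.F ↔ b ∈ G.F) := by
      intro a b h
      simp only [hR₁] at h
      split at h
      · exact hFtrans a b (Or.inl h)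
      · rcases h with h | ⟨h, _⟩
        · exact hFtrans a b (Or.inr h)
        · exact hFtrans a b (Or.inl h)
    -- generic step facts
    have hp'succ : ∀ n : ℕ, p' (n + 1) =
        if G.Owns Xp (p' n) then σ' (p' n) else τ (p' n) := fun _ => rfl
    have hp₁succ : ∀ n : ℕ, p₁ (n + 1) =
        if G.Owns Xp (p₁ n) then σ (p₁ n) else τ₁ (p₁ n) := fun _ => rfl
    have hp₂succ : ∀ n : ℕ, p₂ (n + 1) =
        if G.Owns Xp (p₂ n) then σ (p₂ n) else τ₂ (p₂ n) := fun _ => rfl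
    -- phase-1 step
    have hstep1 : ∀ n, R₁ (p₁ n) (p' n) → R₁ (p₁ (n + 1)) (p' (n + 1)) ∨ Collide n := by
      intro n hR
      set a := p₁ n with ha
      set b := p' n with hb
      by_cases hax : a.1 = Xp
      · left
        have hba : b = a := by simpa [hR₁, if_pos hax] using hR
        have h1 : p₁ (n + 1) = σ a := by
          rw [hp₁succ, ← ha, if_pos ((howns Xp a).2 hax)]
        have h2 : p' (n + 1) = σ' a := by
          rw [hp'succ, ← hb, hba, if_pos ((howns Xp a).2 hax)]
        have hσa : ¬ (σ a).1 = Xp := by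
          have := (hσv a ((howns Xp a).2 hax)).1
          rw [this, hax]; cases Xp <;> simp
        rw [h1, h2]
        simp [hR₁, if_neg hσa, hσ']
      · have hax' : a.1 = !Xp := bool_resolve hax
        have hR' : b = g a ∨ (b = a ∧ a = c₀) := by simpa [hR₁, if_neg hax] using hR
        rcases hR' with hbg | ⟨hba, hac⟩
        · by_cases hacc : a = c₀
          · right
            rw [hCol]
            refine ⟨?_, by rw [← hacc]; exact hax⟩
            rw [← hb, hbg, hacc]
          · left
            have hgax : ¬ (g a).1 = Xp := hax
            have h1 : p₁ (n + 1) = τ (g a) := by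
              rw [hp₁succ, ← ha, if_neg (by rw [howns]; exact hax), hτ₁def]
              simp [if_neg hacc]
            have h2 : p' (n + 1) = τ (g a) := by
              rw [hp'succ, ← hb, hbg, if_neg (by rw [howns]; exact hgax)]
            have hτx : (τ (g a)).1 = Xp := by
              have := (hgτ a hax).1
              rw [this, hax']; cases Xp <;> simp
            rw [h1, h2]
            simp [hR₁, if_pos hτx]
        · left
          have h1 : p₁ (n + 1) = τ c₀ := by
            rw [hp₁succ, ← ha, if_neg (by rw [howns]; exact hax), hτ₁def]
            simp [if_pos hac]
          have h2 : p' (n + 1) = τ c₀ := by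
            rw [hp'succ, ← hb, hba, hac, if_neg (by rw [howns]; rw [hac] at hax; exact hax)]
          have hτx : (τ c₀).1 = Xp := by
            rw [hac] at hax hax'
            have := (hτv c₀ (by rw [howns]; exact hax')).1
            rw [this, hax']; cases Xp <;> simp
          rw [h1, h2]
          simp [hR₁, if_pos hτx]
    -- phase-2 step
    have hstep2 : ∀ n m, R₂ (p₂ n) (p' m) → R₂ (p₂ (n + 1)) (p' (m + 1)) := by
      intro n m hR
      set a := p₂ n with ha
      set b := p' m with hb
      by_cases hax : a.1 = Xp
      · have hba : b = a := by simpa [hR₂, if_pos hax] using hR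
        have h1 : p₂ (n + 1) = σ a := by
          rw [hp₂succ, ← ha, if_pos ((howns Xp a).2 hax)]
        have h2 : p' (m + 1) = σ' a := by
          rw [hp'succ, ← hb, hba, if_pos ((howns Xp a).2 hax)]
        have hσa : ¬ (σ a).1 = Xp := by
          have := (hσv a ((howns Xp a).2 hax)).1
          rw [this, hax]; cases Xp <;> simp
        rw [h1, h2]
        simp [hR₂, if_neg hσa, hσ']
      · have hax' : a.1 = !Xp := bool_resolve hax
        have hbg : b = g a := by simpa [hR₂, if_neg hax] using hR
        have hgax : ¬ (g a).1 = Xp := hax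
        have h1 : p₂ (n + 1) = τ (g a) := by
          rw [hp₂succ, ← ha, if_neg (by rw [howns]; exact hax), hτ₂def]
        have h2 : p' (m + 1) = τ (g a) := by
          rw [hp'succ, ← hb, hbg, if_neg (by rw [howns]; exact hgax)]
        have hτx : (τ (g a)).1 = Xp := by
          have := (hgτ a hax).1
          rw [this, hax']; cases Xp <;> simp
        rw [h1, h2]
        simp [hR₂, if_pos hτx]
    -- prefix invariant
    have hpre : ∀ n, (∀ k, k < n → ¬ Collide k) → R₁ (p₁ n) (p' n) := by
      intro n
      induction n with
      | zero =>
          intro _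
          have h1 : p₁ 0 = c₀ := rfl
          have h2 : p' 0 = c₀ := rfl
          rw [h1, h2]
          by_cases h : c₀.1 = Xp
          · simp [hR₁, if_pos h]
          · simp [hR₁, if_neg h]
      | succ n ih =>
          intro hk
          have hR := ih (fun k hkn => hk k (Nat.lt_succ_of_lt hkn))
          rcases hstep1 n hR with h | h
          · exact h
          · exact absurd h (hk n (Nat.lt_succ_self n))
    -- phase-2 invariant from a collision point
    have hph2 : ∀ m, Collide m → ∀ j, R₂ (p₂ j) (p' (m + j)) := by
      intro m hm j
      induction j with
      | zero =>
          have h2 : p₂ 0 = c₀ := rfl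
          rw [h2]
          simp only [hCol] at hm
          simp [hR₂, if_neg hm.2, Nat.add_zero, hm.1]
      | succ j ih => exact hstep2 j (m + j) ih
    -- conclude
    have hw1 := hσw τ₁ hτ₁v
    have hw2 := hσw τ₂ hτ₂v
    unfold SafetyGame.WinsFor at hw1 hw2 ⊢
    by_cases hXp : Xp = true
    · rw [if_pos hXp] at hw1 hw2 ⊢
      by_cases hcol : ∃ m, Collide m
      · set m := Nat.find hcol with hm
        have hmc : Collide m := Nat.find_spec hcol
        have hmin : ∀ k, k < m → ¬ Collide k := fun k hkm => Nat.find_min hcol hkm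
        intro i
        rcases lt_or_ge i m with hi | hi
        · have hR := hpre i (fun k hki => hmin k (lt_trans hki hi))
          exact fun hmem => (hw1 i) ((hF₁ _ _ hR).2 hmem)
        · obtain ⟨j, rfl⟩ : ∃ j, i = m + j := ⟨i - m, by omega⟩
          exact fun hmem => (hw2 j) ((hF₂ _ _ (hph2 m hmc j)).2 hmem)
      · push_neg at hcol
        intro i
        have hR := hpre i (fun k _ => hcol k)
        exact fun hmem => (hw1 i) ((hF₁ _ _ hR).2 hmem)
    · rw [if_neg hXp] at hw1 hw2 ⊢
      by_cases hcol : ∃ m, Collide m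
      · obtain ⟨m, hmc⟩ := hcol
        obtain ⟨j, hj⟩ := hw2
        exact ⟨m + j, (hF₂ _ _ (hph2 m hmc j)).1 hj⟩
      · push_neg at hcol
        obtain ⟨i, hi⟩ := hw1
        exact ⟨i, (hF₁ _ _ (hpre i (fun k _ => hcol k))).1 hi⟩
  · -- empty buffers right after X's moves
    intro p _
    simp only [hσ', hg]
    exact flushConf_totalBuf _
  · -- at most one message from step 2 on
    intro τ hτv i hi
    set p' := G.playOf Xp σ' τ c₀ with hp'
    have hrel' : ∀ n, G.rel (p' n) (p' (n + 1)) := step_rel σ' τ hσ'v hτv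
    have hplay_succ : ∀ (n : ℕ), p' (n + 1) =
        if G.Owns Xp (p' n) then σ' (p' n) else τ (p' n) := fun _ => rfl
    obtain ⟨j, rfl⟩ : ∃ j, i = j + 2 := ⟨i - 2, by omega⟩
    by_cases h : (p' (j + 1)).1 = Xp
    · have h2 : p' (j + 2) = σ' (p' (j + 1)) := by
        rw [hplay_succ, if_pos ((howns Xp _).2 h)]
      rw [h2]
      simp only [hσ', hg]
      rw [flushConf_totalBuf]
      omega
    · -- previous position was X's; buffers are empty at j+1
      have halt : (p' (j + 1)).1 = !(p' j).1 := (hrel' j).1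
      have hjx : (p' j).1 = Xp := by
        by_contra hc
        have := bool_resolve hc
        rw [this] at halt
        simp at halt
        exact h halt
      have h1 : p' (j + 1) = σ' (p' j) := by
        rw [hplay_succ, if_pos ((howns Xp _).2 hjx)]
      have hb0 : totalBuf (p' (j + 1)).2 = 0 := by
        rw [h1]
        simp only [hσ', hg]
        exact flushConf_totalBuf _
      have h2 := (hrel' (j + 1)).2
      rw [if_neg h] at h2
      obtain ⟨c₁, hu, hs⟩ := h2
      have hc₁ : totalBuf c₁ ≤ 0 := hb0 ▸ updStar_totalBuf hu
      have hfin := progStep_totalBuf hs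
      rw [show j + 1 + 1 = j + 2 by omega] at hfin
      omega
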